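/- arXiv:1510.02021 — 2 statements merged into one kernel-verified Lean document; each statement's English description precedes it below -/
import Mathlib

section
/- Let q be a prime power and let d ≥ 2 be an even divisor of q−1. Let ξ be a primitive element of F_{q²}. Let a, b, c ∈ F_{q²} and j ∈ ℤ satisfy a·b ≠ 0, b = ξ^{(q−1)·j}·a^q and a·c^q = b^q·c, and assume b·u ≠ a·v. Let u, v ∈ F_{q²} and the positive integer r satisfy either (u^{q+1} = v^{q+1} and gcd(r, (q²−1)/d) = 1) or (u^{q+1} ≠ v^{q+1} and r = 1). Let φ be a polynomial over F_{q²}, define f(x) = (a·x^q + b·x + c)^r · φ((a·x^q + b·x + c)^{(q²−1)/d}) + u·x^q + v·x and h(x) = x^r·[B·φ(x) + A^{1−r}·B^{q·r}·φ(x)^q + u^{q+1} − v^{q+1}]^{(q²−1)/d}. Then: (i) if j is even, f is a permutation polynomial of F_{q²} if and only if h permutes U_{d/2}; (ii) if j is odd, f is a permutation polynomial of F_{q²} if and only if x ↦ h(x) is a bijection of the set U_d \ U_{d/2}. -/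
/-!
Put `T x = a x ^ q + b x + c`, `ε = ξ ^ ((q - 1) j)`, `D = u ^ (q + 1) - v ^ (q + 1)` and
`ψ t = t ^ r φ (t ^ E)` with `E = (q ^ 2 - 1) / d`, so that `f x = ψ (T x) + u x ^ q + v x`. Then `T`
takes values in the `𝔽_q`-line `V = {z | ε z ^ q = z}`, and the semilinear map
`N y = A y ^ q + B y` (note `B = ε A ^ q`) maps `F` onto `V` and sends `u x ^ q + v x` to
`D (a x ^ q + b x)`. Hence `N (f x) + D c = Ψ (T x)` for `Ψ t = A ψ(t) ^ q + B ψ(t) + D t`, which on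
`V` equals `t ^ r G (t ^ E)`, `G` being the bracket in `h`; so `f` permutes `F` iff `Ψ` is injective
on `V`. Since `h (t ^ E) = Ψ (t) ^ E` and `gcd (r, E) = 1`, this happens iff `h` permutes
`S = {t ^ E | t ∈ V, t ≠ 0}`; finally `S = {x | x ^ (d / 2) = (-1) ^ j}`, which is `U_{d/2}` or
`U_d \ U_{d/2}` according to the parity of `j`.
-/

open Function Set Polynomial

theorem bijective_iff_injOn_of_comp_eq {α β : Type*} [Finite α] [Finite β] {f : α → α}
    {T N : α → β} {g : β → β} {V : Set β} (hT : ∀ x, T x ∈ V) (hN : V ⊆ range N)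
    (hg : MapsTo g V V) (hcomm : ∀ x, N (f x) = g (T x))
    (hsep : ∀ x y, T x = T y → f x = f y → x = y) :
    Bijective f ↔ InjOn g V := by
  refine ⟨fun hf => ?_, fun hg_inj => Finite.injective_iff_bijective.1 fun x y hxy =>
    hsep x y (hg_inj (hT x) (hT y) (by rw [← hcomm, ← hcomm, hxy])) hxy⟩
  refine ((toFinite V).surjOn_iff_bijOn_of_mapsTo hg).1 (fun z hz => ?_) |>.injOn
  obtain ⟨y, rfl⟩ := hN hz
  obtain ⟨x, rfl⟩ := hf.surjective y
  exact ⟨T x, hT x, (hcomm x).symm⟩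

theorem eq_of_pow_eq_of_pow_eq_of_coprime {G : Type*} [CommGroupWithZero G] {x y : G} {r E : ℕ}
    (hrE : r.Coprime E) (hy : y ≠ 0) (hr : x ^ r = y ^ r) (hE : x ^ E = y ^ E) : x = y := by
  have hxy : (x / y) ^ r = 1 ∧ (x / y) ^ E = 1 := by
    simp only [div_pow, hr, hE, div_self (pow_ne_zero _ hy), and_self]
  exact (div_eq_one_iff_eq hy).1 ((pow_eq_one_iff_of_coprime hrE).1 hxy)

theorem injOn_iff_bijOn_image_pow {G : Type*} [CommGroupWithZero G] [Finite G] {V : Set G}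
    {r E : ℕ} {H : G → G} (hV : 0 ∈ V) (hr : r ≠ 0) (hE : E ≠ 0) (hrE : r.Coprime E)
    (hmaps : MapsTo (fun t => t ^ r * H (t ^ E)) V V) :
    InjOn (fun t => t ^ r * H (t ^ E)) V ↔
      BijOn (fun x => x ^ r * H x ^ E) ((· ^ E) '' (V \ {0})) ((· ^ E) '' (V \ {0})) := by
  set Ψ : G → G := fun t => t ^ r * H (t ^ E)
  set h : G → G := fun x => x ^ r * H x ^ E
  set S := (· ^ E) '' (V \ {0})
  have hcomm (t : G) : h (t ^ E) = Ψ t ^ E := by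
    simp only [h, Ψ, mul_pow, ← pow_mul, mul_comm r E]
  have hΨ0 : Ψ 0 = 0 := by simp [Ψ, hr]
  constructor
  · intro hinj
    have hmaps' : MapsTo Ψ (V \ {0}) (V \ {0}) := fun t ht =>
      ⟨hmaps ht.1, fun h0 => ht.2 (hinj ht.1 hV (h0.trans hΨ0.symm))⟩
    have hbij := ((toFinite _).injOn_iff_bijOn_of_mapsTo hmaps').1 (hinj.mono sdiff_subset)
    have hmapsS : MapsTo h S S := by
      rintro _ ⟨t, ht, rfl⟩
      exact ⟨Ψ t, hmaps' ht, (hcomm t).symm⟩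
    refine ((toFinite S).surjOn_iff_bijOn_of_mapsTo hmapsS).1 ?_
    rintro _ ⟨_, ht', rfl⟩
    obtain ⟨t, ht, rfl⟩ := hbij.surjOn ht'
    exact ⟨t ^ E, ⟨t, ht, rfl⟩, hcomm t⟩
  · intro hbij
    -- `h` maps `S` into `S ∌ 0`, so `H` cannot vanish on `S`
    have hΨ_ne (t : G) (ht : t ∈ V \ {0}) : Ψ t ≠ 0 := by
      refine mul_ne_zero (pow_ne_zero _ ht.2) fun hH => ?_
      obtain ⟨s, hs, hsE⟩ := hbij.mapsTo ⟨t, ht, rfl⟩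
      simp only [h, hH, zero_pow hE, mul_zero, pow_eq_zero_iff hE] at hsE
      exact hs.2 hsE
    have hΨ_eq_zero {t : G} (ht : t ∈ V) : Ψ t = 0 ↔ t = 0 :=
      ⟨fun h0 => by_contra fun ht0 => hΨ_ne t ⟨ht, ht0⟩ h0, fun ht0 => ht0 ▸ hΨ0⟩
    intro t ht t' ht' heq
    by_cases ht0 : t = 0
    · rw [ht0, eq_comm, ← hΨ_eq_zero ht', ← heq, (hΨ_eq_zero ht).2 ht0]
    have ht'0 : t' ≠ 0 := fun h0 => ht0 ((hΨ_eq_zero ht).1 (heq.trans ((hΨ_eq_zero ht').2 h0)))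
    have hE_eq : t ^ E = t' ^ E :=
      hbij.injOn ⟨t, ⟨ht, ht0⟩, rfl⟩ ⟨t', ⟨ht', ht'0⟩, rfl⟩ (by simp only [hcomm, heq])
    have hr_eq : t ^ r = t' ^ r := by
      refine mul_right_cancel₀ (fun hH => hΨ_ne t' ⟨ht', ht'0⟩ ?_) (hE_eq ▸ heq : Ψ t = _)
      simp only [Ψ, ← hE_eq, hH, mul_zero]
    exact eq_of_pow_eq_of_pow_eq_of_coprime hrE ht'0 hr_eq hE_eq

theorem setOf_pow_eq_neg_one {R : Type*} [Ring R] [NoZeroDivisors R] (h : (-1 : R) ≠ 1) (m : ℕ) :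
    {x : R | x ^ m = -1} = {x | x ^ (m + m) = 1} \ {x | x ^ m = 1} := by
  ext x
  simp only [mem_ofPred_eq, mem_sdiff, pow_add, mul_self_eq_one_iff]
  constructor
  · intro hx; simp [hx, h]
  · rintro ⟨hx | hx, hx'⟩
    · exact absurd hx hx'
    · exact hx

theorem exists_pow_eq_of_pow_eq_one {R : Type*} [CommRing R] [IsDomain R] {ξ x : R} {k m : ℕ}
    (hξ : IsPrimitiveRoot ξ (k * m)) (hk : k ≠ 0) (hm : m ≠ 0) (hx : x ^ m = 1) :
    ∃ z, z ^ k = x := by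
  have : NeZero m := ⟨hm⟩
  obtain ⟨i, -, hi⟩ := (hξ.pow (by positivity) rfl).eq_pow_of_pow_eq_one hx
  exact ⟨ξ ^ i, by rw [← pow_mul, mul_comm, pow_mul, hi]⟩

theorem sq_sub_one_eq_of_eq_two_mul_mul_add_one {q m e : ℕ} (hq : q = 2 * m * e + 1) :
    q ^ 2 - 1 = 2 * (e * (q + 1)) * m :=
  Nat.sub_eq_of_eq_add (by rw [hq]; ring)

section FiniteFieldOfCardSq

variable {F : Type*} [Field F] [Fintype F] {q : ℕ}

theorem exists_eq_ringChar_pow_of_card_eq_sq (hF : Fintype.card F = q ^ 2) :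
    ∃ i, q = ringChar F ^ i := by
  obtain ⟨n, hp, hcard⟩ := FiniteField.card F (ringChar F)
  obtain ⟨i, -, hi⟩ := (Nat.dvd_prime_pow hp).1 (hcard ▸ hF ▸ Dvd.intro_left _ (sq q).symm)
  exact ⟨i, hi⟩

theorem add_pow_of_card_eq_sq (hF : Fintype.card F = q ^ 2) (x y : F) :
    (x + y) ^ q = x ^ q + y ^ q := by
  obtain ⟨i, rfl⟩ := exists_eq_ringChar_pow_of_card_eq_sq hF
  have : Fact (ringChar F).Prime := ⟨CharP.char_is_prime F _⟩
  exact add_pow_char_pow ..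

theorem sub_pow_of_card_eq_sq (hF : Fintype.card F = q ^ 2) (x y : F) :
    (x - y) ^ q = x ^ q - y ^ q :=
  eq_sub_of_add_eq (by rw [← add_pow_of_card_eq_sq hF, sub_add_cancel])

theorem pow_pow_of_card_eq_sq (hF : Fintype.card F = q ^ 2) (x : F) : (x ^ q) ^ q = x := by
  rw [← pow_mul, ← sq, ← hF, FiniteField.pow_card]

theorem pow_succ_pow_of_card_eq_sq (hF : Fintype.card F = q ^ 2) (x : F) :
    (x ^ (q + 1)) ^ q = x ^ (q + 1) := by
  rw [pow_succ, mul_pow, pow_pow_of_card_eq_sq hF, mul_comm]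

theorem pow_sub_one_pow_succ_of_card_eq_sq (hF : Fintype.card F = q ^ 2) {η : F} (hη : η ≠ 0) :
    (η ^ (q - 1)) ^ (q + 1) = 1 := by
  have : (q - 1) * (q + 1) = Fintype.card F - 1 := by
    rw [hF, mul_comm, ← Nat.sq_sub_sq, one_pow]
  rw [← pow_mul, this, FiniteField.pow_card_sub_one_eq_one η hη]

end FiniteFieldOfCardSq

/-- When `Fintype.card F = q ^ 2`, this is the subfield `𝔽_q` for `ε = 1`, and the line `η⁻¹ 𝔽_q`
for `ε = η ^ (q - 1)`. -/
def twistedFixed {F : Type*} [Field F] (q : ℕ) (ε : F) : Set F := {z | ε * z ^ q = z}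

namespace twistedFixed

variable {F : Type*} [Field F] {q m e E : ℕ} {ε z w η : F}

theorem zero_mem (hq : q ≠ 0) : (0 : F) ∈ twistedFixed q ε := by
  simp [twistedFixed, hq]

theorem mul_mem {D : F} (hD : D ^ q = D) (hz : z ∈ twistedFixed q ε) :
    D * z ∈ twistedFixed q ε := by
  simp only [twistedFixed, mem_ofPred_eq, mul_pow, hD] at *
  linear_combination D * hz

theorem pow_eq (hε : ε ^ (q + 1) = 1) (hz : z ∈ twistedFixed q ε) : z ^ q = ε ^ q * z := by
  simp only [twistedFixed, mem_ofPred_eq] at hz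
  linear_combination -z ^ q * hε + ε ^ q * hz

theorem mem_pow_sub_one_iff (hq : q ≠ 0) (hη : η ≠ 0) :
    z ∈ twistedFixed q (η ^ (q - 1)) ↔ (η * z) ^ q = η * z := by
  have : η * (η ^ (q - 1) * z ^ q) = (η * z) ^ q := by
    rw [mul_pow, ← mul_assoc, ← pow_succ', Nat.sub_add_cancel (Nat.one_le_iff_ne_zero.2 hq)]
  rw [twistedFixed, mem_ofPred_eq, ← this, mul_right_inj' hη]

theorem image_pow_subset (hq : q = 2 * m * e + 1) (hE : E = e * (q + 1)) (hη : η ≠ 0) :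
    (· ^ E) '' (twistedFixed q (η ^ (q - 1)) \ {0}) ⊆ {x | x ^ m = (η ^ (E * m))⁻¹} := by
  rintro _ ⟨t, ⟨ht, ht0⟩, rfl⟩
  have hρ : (η * t) ^ (2 * m * e) = 1 := by
    refine mul_right_cancel₀ (mul_ne_zero hη ht0) ?_
    rw [← pow_succ, ← hq, one_mul]
    exact (mem_pow_sub_one_iff (by omega) hη).1 ht
  have hEm : E * m = 2 * m * e * (m * e + 1) := by subst hE hq; ring
  refine eq_inv_of_mul_eq_one_left ?_
  rw [← pow_mul, ← mul_pow, mul_comm, hEm, pow_mul, hρ, one_pow]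

theorem pow_mul_bracket_eq (hε : ε ^ (q + 1) = 1) {A B u v : F} (hAB : A = ε * B ^ q)
    (hB0 : B ≠ 0) {r : ℕ} (hD : u ^ (q + 1) = v ^ (q + 1) ∨ r = 1) (ht : z ∈ twistedFixed q ε)
    (s : F) :
    z ^ r * (B * s + A * (A ^ r)⁻¹ * B ^ (q * r) * s ^ q + u ^ (q + 1) - v ^ (q + 1)) =
      A * (z ^ r * s) ^ q + B * (z ^ r * s) + (u ^ (q + 1) - v ^ (q + 1)) * z := by
  have hcoef : A * (A ^ r)⁻¹ * B ^ (q * r) = A * ε ^ (q * r) := by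
    have hεr : ε ^ (q * r) * ε ^ r = 1 := by
      rw [← pow_add, show q * r + r = (q + 1) * r by ring, pow_mul, hε, one_pow]
    rw [hAB, mul_pow, ← pow_mul, ← hAB, mul_inv, inv_eq_of_mul_eq_one_left hεr]
    field_simp
  have hzq : (z ^ r * s) ^ q = ε ^ (q * r) * z ^ r * s ^ q := by
    rw [mul_pow, ← pow_mul, mul_comm r q, pow_mul, pow_eq hε ht, mul_pow, ← pow_mul]
  rw [hcoef, hzq]
  rcases hD with hD | rfl
  · rw [hD]
    ring
  · ring

variable [Fintype F]

theorem add_mem (hF : Fintype.card F = q ^ 2) (hz : z ∈ twistedFixed q ε)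
    (hw : w ∈ twistedFixed q ε) : z + w ∈ twistedFixed q ε := by
  simp only [twistedFixed, mem_ofPred_eq, add_pow_of_card_eq_sq hF] at *
  linear_combination hz + hw

theorem sub_mem (hF : Fintype.card F = q ^ 2) (hz : z ∈ twistedFixed q ε)
    (hw : w ∈ twistedFixed q ε) : z - w ∈ twistedFixed q ε := by
  simp only [twistedFixed, mem_ofPred_eq, sub_pow_of_card_eq_sq hF] at *
  linear_combination hz - hw

theorem semilinear_mem (hF : Fintype.card F = q ^ 2) (hε : ε ^ (q + 1) = 1) (A y : F) :
    A * y ^ q + ε * A ^ q * y ∈ twistedFixed q ε := by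
  simp only [twistedFixed, mem_ofPred_eq, add_pow_of_card_eq_sq hF, mul_pow,
    pow_pow_of_card_eq_sq hF]
  linear_combination A * y ^ q * hε

theorem mem_of_mul_pow_eq (hF : Fintype.card F = q ^ 2) (hε : ε ^ (q + 1) = 1) {a b c : F}
    (ha : a ≠ 0) (hb : b = ε * a ^ q) (hac : a * c ^ q = b ^ q * c) : c ∈ twistedFixed q ε := by
  have hbq : b ^ q = ε ^ q * a := by rw [hb, mul_pow, pow_pow_of_card_eq_sq hF]
  refine mul_left_cancel₀ ha ?_
  linear_combination ε * hac + ε * c * hbq + a * c * hε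

/-- Since `z + z ^ q = 1` for `z = 1 / 2`, each `w` in the set is hit by `y = (w / (2 * A)) ^ q`. -/
theorem subset_range_semilinear (hF : Fintype.card F = q ^ 2) (h2 : (2 : F) ≠ 0) {A : F}
    (hA : A ≠ 0) : twistedFixed q ε ⊆ range fun y => A * y ^ q + ε * A ^ q * y := by
  intro w hw
  have h2q : (2 : F) ^ q = 2 := by
    rw [← one_add_one_eq_two, add_pow_of_card_eq_sq hF, one_pow]
  refine ⟨(w / (2 * A)) ^ q, ?_⟩
  simp only [twistedFixed, mem_ofPred_eq] at hw
  simp only [pow_pow_of_card_eq_sq hF, div_pow, mul_pow, h2q]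
  field_simp
  linear_combination hw

/-- Every `m`-th root of unity is `z ^ (2 * E) = (z ^ (q + 1)) ^ E`, and the norm `z ^ (q + 1)`
lies in `𝔽_q`. -/
theorem subset_image_pow (hF : Fintype.card F = q ^ 2) (hq : q = 2 * m * e + 1)
    (hE : E = e * (q + 1)) (hm : m ≠ 0) {ξ : F} (hξ : IsPrimitiveRoot ξ (q ^ 2 - 1))
    (hη : η ≠ 0) :
    {x | x ^ m = (η ^ (E * m))⁻¹} ⊆ (· ^ E) '' (twistedFixed q (η ^ (q - 1)) \ {0}) := by
  have hE0 : 2 * E ≠ 0 := by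
    rintro h0
    have := Fintype.one_lt_card (α := F)
    simp_all
  intro x hx
  have hx1 : (η ^ E * x) ^ m = 1 := by
    rw [mul_pow, ← pow_mul, hx, mul_inv_cancel₀ (pow_ne_zero _ hη)]
  have hξ' : IsPrimitiveRoot ξ (2 * E * m) := by
    rwa [hE, ← sq_sub_one_eq_of_eq_two_mul_mul_add_one hq]
  obtain ⟨z, hz⟩ := exists_pow_eq_of_pow_eq_one hξ' hE0 hm hx1
  have hz0 : z ≠ 0 := by
    rintro rfl
    rw [zero_pow hE0] at hz
    simp [← hz, hm] at hx1
  have hzE : (z ^ (q + 1)) ^ E = z ^ (2 * E) := by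
    have : (z ^ (q + 1)) ^ (q + 1) = (z ^ 2) ^ (q + 1) := by
      rw [pow_succ (z ^ (q + 1)) q, pow_succ_pow_of_card_eq_sq hF]
      ring
    rw [hE, mul_comm e, pow_mul, this, ← pow_mul, ← pow_mul]
  refine ⟨η⁻¹ * z ^ (q + 1), ⟨?_, mul_ne_zero (inv_ne_zero hη) (pow_ne_zero _ hz0)⟩, ?_⟩
  · rw [mem_pow_sub_one_iff (by omega) hη, mul_inv_cancel_left₀ hη, pow_succ_pow_of_card_eq_sq hF]
  · show (η⁻¹ * z ^ (q + 1)) ^ E = x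
    rw [mul_pow, hzE, hz, inv_pow, inv_mul_cancel_left₀ (pow_ne_zero _ hη)]

theorem image_pow_eq (hF : Fintype.card F = q ^ 2) (hq : q = 2 * m * e + 1)
    (hE : E = e * (q + 1)) (hm : m ≠ 0) {ξ : F} (hξ : IsPrimitiveRoot ξ (q ^ 2 - 1))
    (hη : η ≠ 0) :
    (· ^ E) '' (twistedFixed q (η ^ (q - 1)) \ {0}) = {x | x ^ m = (η ^ (E * m))⁻¹} :=
  (image_pow_subset hq hE hη).antisymm (subset_image_pow hF hq hE hm hξ hη)

end twistedFixed

section PermutationCriterion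

variable {F : Type*} [Field F] [Fintype F] {q : ℕ}

theorem semilinear_apply_linearized (hF : Fintype.card F = q ^ 2) (a b u v x : F) :
    (b * u - a * v) * (u * x ^ q + v * x) ^ q + (a * u ^ q - b * v ^ q) * (u * x ^ q + v * x) =
      (u ^ (q + 1) - v ^ (q + 1)) * (a * x ^ q + b * x) := by
  rw [add_pow_of_card_eq_sq hF, mul_pow, mul_pow, pow_pow_of_card_eq_sq hF]
  ring

theorem sub_mul_pow_eq_mul_sub_pow (hF : Fintype.card F = q ^ 2) {ε : F} (hε : ε ^ (q + 1) = 1)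
    {a b : F} (hb : b = ε * a ^ q) (u v : F) :
    a * u ^ q - b * v ^ q = ε * (b * u - a * v) ^ q := by
  rw [sub_pow_of_card_eq_sq hF, mul_pow, mul_pow, hb, mul_pow, pow_pow_of_card_eq_sq hF]
  linear_combination -a * u ^ q * hε

theorem bijective_iff_bijOn_image_pow (hF : Fintype.card F = q ^ 2) (h2 : (2 : F) ≠ 0) {ε : F}
    (hε : ε ^ (q + 1) = 1) {a b c u v A B : F} (ha : a ≠ 0) (hb : b = ε * a ^ q)
    (hac : a * c ^ q = b ^ q * c) (hA : A = b * u - a * v) (hB : B = a * u ^ q - b * v ^ q)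
    (hA0 : A ≠ 0) {r E : ℕ} (hr : r ≠ 0) (hE : E ≠ 0) (hrE : r.Coprime E)
    (hD : u ^ (q + 1) = v ^ (q + 1) ∨ r = 1) (φ : F[X]) :
    Bijective (fun x => (a * x ^ q + b * x + c) ^ r * φ.eval ((a * x ^ q + b * x + c) ^ E) +
        u * x ^ q + v * x) ↔
      BijOn (fun x => x ^ r * (B * φ.eval x + A * (A ^ r)⁻¹ * B ^ (q * r) * (φ.eval x) ^ q +
          u ^ (q + 1) - v ^ (q + 1)) ^ E)
        ((· ^ E) '' (twistedFixed q ε \ {0})) ((· ^ E) '' (twistedFixed q ε \ {0})) := by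
  set V := twistedFixed q ε
  set D := u ^ (q + 1) - v ^ (q + 1)
  set ψ : F → F := fun t => t ^ r * φ.eval (t ^ E)
  set G : F → F := fun x => B * φ.eval x + A * (A ^ r)⁻¹ * B ^ (q * r) * (φ.eval x) ^ q +
    u ^ (q + 1) - v ^ (q + 1)
  have hq : q ≠ 0 := by
    rintro rfl
    simp at hF
  have hBA : B = ε * A ^ q := by rw [hB, hA, sub_mul_pow_eq_mul_sub_pow hF hε hb]
  have hAB : A = ε * B ^ q := by
    rw [hBA, mul_pow, pow_pow_of_card_eq_sq hF, ← mul_assoc, ← pow_succ', hε, one_mul]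
  have hB0 : B ≠ 0 := by
    rintro rfl
    simp [hq, hA0] at hAB
  have hc : c ∈ V := twistedFixed.mem_of_mul_pow_eq hF hε ha hb hac
  have hDq : D ^ q = D := by
    rw [sub_pow_of_card_eq_sq hF, pow_succ_pow_of_card_eq_sq hF, pow_succ_pow_of_card_eq_sq hF]
  have hTV (x : F) : a * x ^ q + b * x + c ∈ V := by
    rw [hb]
    exact twistedFixed.add_mem hF (twistedFixed.semilinear_mem hF hε a x) hc
  have hmaps : MapsTo (fun t => t ^ r * G (t ^ E)) V V := fun t ht => by
    simp only [G]
    rw [twistedFixed.pow_mul_bracket_eq hε hAB hB0 hD ht, hBA]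
    exact twistedFixed.add_mem hF (twistedFixed.semilinear_mem hF hε A _)
      (twistedFixed.mul_mem hDq ht)
  have hN : V ⊆ range fun y => A * y ^ q + B * y + D * c := fun w hw => by
    obtain ⟨y, hy⟩ := twistedFixed.subset_range_semilinear hF h2 hA0
      (twistedFixed.sub_mem hF hw (twistedFixed.mul_mem hDq hc))
    exact ⟨y, by simp only [hBA, hy, sub_add_cancel]⟩
  have hcomm (x : F) : A * (ψ (a * x ^ q + b * x + c) + u * x ^ q + v * x) ^ q +
      B * (ψ (a * x ^ q + b * x + c) + u * x ^ q + v * x) + D * c =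
      A * ψ (a * x ^ q + b * x + c) ^ q + B * ψ (a * x ^ q + b * x + c) +
        D * (a * x ^ q + b * x + c) := by
    have hlin := semilinear_apply_linearized hF a b u v x
    rw [← hA, ← hB] at hlin
    rw [add_assoc _ (u * x ^ q), add_pow_of_card_eq_sq hF]
    linear_combination hlin
  have hsep (x y : F) (hT : a * x ^ q + b * x + c = a * y ^ q + b * y + c)
      (hf : ψ (a * x ^ q + b * x + c) + u * x ^ q + v * x =
        ψ (a * y ^ q + b * y + c) + u * y ^ q + v * y) : x = y := by
    rw [hT] at hf
    refine mul_left_cancel₀ hA0 ?_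
    rw [hA]
    linear_combination u * hT - a * hf
  rw [bijective_iff_injOn_of_comp_eq (T := fun x => a * x ^ q + b * x + c)
    (N := fun y => A * y ^ q + B * y + D * c) hTV hN hmaps
    (fun x => (hcomm x).trans (twistedFixed.pow_mul_bracket_eq hε hAB hB0 hD (hTV x) _).symm) hsep]
  exact injOn_iff_bijOn_image_pow (twistedFixed.zero_mem hq) hr hE hrE hmaps

end PermutationCriterion

theorem stmt_3_general {F : Type*} [Field F] [Fintype F]
    (q : ℕ) (hF : Fintype.card F = q ^ 2)
    (d : ℕ) (hd2 : 2 ≤ d) (hdeven : Even d) (hdvd : d ∣ q - 1)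
    (ξ : F) (hξ : orderOf ξ = q ^ 2 - 1)
    (a b c u v : F) (j : ℤ) (hab : a * b ≠ 0)
    (hb : b = ξ ^ (((q : ℤ) - 1) * j) * a ^ q)
    (hac : a * c ^ q = b ^ q * c)
    (hA0 : b * u ≠ a * v)
    (r : ℕ) (hr : 0 < r)
    (huvr : (u ^ (q + 1) = v ^ (q + 1) ∧ Nat.gcd r ((q ^ 2 - 1) / d) = 1) ∨
      (u ^ (q + 1) ≠ v ^ (q + 1) ∧ r = 1))
    (φ : Polynomial F)
    (A B : F) (hA : A = b * u - a * v) (hB : B = a * u ^ q - b * v ^ q)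
    (f h : F → F)
    (hf : f = fun x => (a * x ^ q + b * x + c) ^ r *
      φ.eval ((a * x ^ q + b * x + c) ^ ((q ^ 2 - 1) / d)) + u * x ^ q + v * x)
    (hh : h = fun x => x ^ r * (B * φ.eval x +
      A * (A ^ r)⁻¹ * B ^ (q * r) * (φ.eval x) ^ q +
      u ^ (q + 1) - v ^ (q + 1)) ^ ((q ^ 2 - 1) / d)) :
    (Even j → (Function.Bijective f ↔
      Set.BijOn h {x : F | x ^ (d / 2) = 1} {x : F | x ^ (d / 2) = 1})) ∧
    (Odd j → (Function.Bijective f ↔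
      Set.BijOn h ({x : F | x ^ d = 1} \ {x : F | x ^ (d / 2) = 1})
        ({x : F | x ^ d = 1} \ {x : F | x ^ (d / 2) = 1}))) := by
  obtain ⟨m, rfl⟩ := hdeven
  obtain ⟨e, he⟩ := hdvd
  have hq1 : 1 < q ^ 2 := hF ▸ Fintype.one_lt_card
  have hq : q = 2 * m * e + 1 := by
    rw [two_mul, ← he, Nat.sub_add_cancel (Nat.one_le_iff_ne_zero.2 (by rintro rfl; simp at hq1))]
  have he0 : e ≠ 0 := by
    rintro rfl
    simp [hq] at hq1
  have hn := sq_sub_one_eq_of_eq_two_mul_mul_add_one hq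
  have hE : (q ^ 2 - 1) / (m + m) = e * (q + 1) :=
    Nat.div_eq_of_eq_mul_left (by omega) (by rw [hn]; ring)
  have hprim : IsPrimitiveRoot ξ (q ^ 2 - 1) := hξ ▸ IsPrimitiveRoot.orderOf ξ
  have hprim2 : IsPrimitiveRoot (ξ ^ (e * (q + 1) * m)) 2 :=
    hprim.pow (by omega) (by rw [hn]; ring)
  have hneg := hprim2.eq_neg_one_of_two_right
  have hne : (-1 : F) ≠ 1 := hneg ▸ hprim2.ne_one one_lt_two
  have hη : ξ ^ j ≠ 0 := zpow_ne_zero _ (hprim.ne_zero (by omega))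
  have hbη : b = (ξ ^ j) ^ (q - 1) * a ^ q := by
    rw [hb, ← zpow_natCast (ξ ^ j), ← zpow_mul, Nat.cast_sub (by omega), Nat.cast_one,
      mul_comm j]
  have hpow : (ξ ^ j) ^ ((q ^ 2 - 1) / (m + m) * m) = (-1) ^ j := by
    rw [hE, ← zpow_natCast, ← zpow_mul, mul_comm, zpow_mul, zpow_natCast, hneg]
  have hrE : r.Coprime ((q ^ 2 - 1) / (m + m)) :=
    huvr.elim And.right fun h => h.2 ▸ Nat.coprime_one_left _
  have key := bijective_iff_bijOn_image_pow hF (fun h => hne (by linear_combination -h))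
    (pow_sub_one_pow_succ_of_card_eq_sq hF hη) (left_ne_zero_of_mul hab) hbη hac hA hB
    (hA ▸ sub_ne_zero.2 hA0) hr.ne' (by rw [hE]; exact mul_ne_zero he0 q.succ_ne_zero) hrE
    (huvr.imp And.left And.right) φ
  rw [twistedFixed.image_pow_eq hF hq hE (by omega) hprim hη, hpow] at key
  subst hf hh
  rw [key, show (m + m) / 2 = m by omega]
  exact ⟨fun hj => by rw [hj.neg_one_zpow, inv_one],
    fun hj => by rw [hj.neg_one_zpow, inv_neg_one, setOf_pow_eq_neg_one hne]⟩

theorem stmt_3 {F : Type*} [Field F] [Fintype F]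
    (q : ℕ) (hq : IsPrimePow q) (hF : Fintype.card F = q ^ 2)
    (d : ℕ) (hd2 : 2 ≤ d) (hdeven : Even d) (hdvd : d ∣ q - 1)
    (ξ : F) (hξ : orderOf ξ = q ^ 2 - 1)
    (a b c u v : F) (j : ℤ) (hab : a * b ≠ 0)
    (hb : b = ξ ^ (((q : ℤ) - 1) * j) * a ^ q)
    (hac : a * c ^ q = b ^ q * c)
    (hA0 : b * u ≠ a * v)
    (r : ℕ) (hr : 0 < r)
    (huvr : (u ^ (q + 1) = v ^ (q + 1) ∧ Nat.gcd r ((q ^ 2 - 1) / d) = 1) ∨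
      (u ^ (q + 1) ≠ v ^ (q + 1) ∧ r = 1))
    (φ : Polynomial F)
    (A B : F) (hA : A = b * u - a * v) (hB : B = a * u ^ q - b * v ^ q)
    (f h : F → F)
    (hf : f = fun x => (a * x ^ q + b * x + c) ^ r *
      φ.eval ((a * x ^ q + b * x + c) ^ ((q ^ 2 - 1) / d)) + u * x ^ q + v * x)
    (hh : h = fun x => x ^ r * (B * φ.eval x +
      A * (A ^ r)⁻¹ * B ^ (q * r) * (φ.eval x) ^ q +
      u ^ (q + 1) - v ^ (q + 1)) ^ ((q ^ 2 - 1) / d)) :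
    (Even j → (Function.Bijective f ↔
      Set.BijOn h {x : F | x ^ (d / 2) = 1} {x : F | x ^ (d / 2) = 1})) ∧
    (Odd j → (Function.Bijective f ↔
      Set.BijOn h ({x : F | x ^ d = 1} \ {x : F | x ^ (d / 2) = 1})
        ({x : F | x ^ d = 1} \ {x : F | x ^ (d / 2) = 1}))) :=
  stmt_3_general q hF d hd2 hdeven hdvd ξ hξ a b c u v j hab hb hac hA0 r hr huvr φ A B hA hB f h hf
    hh
end

section
/- Let q be an odd prime power, r a positive integer, and c, u elements of the subfield F_q of F_{q²}. Then f(x) = (x^q + x + c)^r + u·x^q − u·x is a permutation polynomial of F_{q²} if and only if u ≠ 0 and gcd(r, q−1) = 1. -/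
/-!
Write `σ x = x ^ q`, an involutive automorphism of `F` with fixed field `𝔽_q`. Then
`f x = (σ x + x + c) ^ r + u * (σ x - x)`, where the first summand is fixed by `σ` and the
second is negated by it; in odd characteristic `f x = f y` therefore splits into
`(σ x + x + c) ^ r = (σ y + y + c) ^ r` and `u * (σ x - x) = u * (σ y - y)`, and `x` is
recovered from `σ x + x` and `σ x - x`. So `f` is injective iff `u ≠ 0` and `s ↦ s ^ r` is
injective on `𝔽_q`, i.e. `gcd r (q - 1) = 1`; the element negated by `σ` that kills the case
`u = 0` is a primitive `2 (q - 1)`-th root of unity.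
-/

section Involution

variable {F : Type*} [Field F] (σ : F →+* F)

theorem injective_pow_add_mul_sub_of_involutive (hσ : Function.Involutive σ)
    (h2 : (2 : F) ≠ 0) {r : ℕ} {c u : F} (hc : σ c = c) (hu : σ u = u) (hu0 : u ≠ 0)
    (hr : Set.InjOn (· ^ r) {s | σ s = s}) :
    Function.Injective fun x => (σ x + x + c) ^ r + u * σ x - u * x := by
  intro x y hxy
  have hfix : ∀ z, σ (σ z + z + c) = σ z + z + c := fun z => by
    rw [map_add, map_add, hσ, hc, add_comm (σ z)]
  have hdiff : (σ x + x + c) ^ r - (σ y + y + c) ^ r = u * ((σ y - y) - (σ x - x)) := by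
    linear_combination hxy
  -- the left side of `hdiff` is fixed by `σ`, the right side is negated
  have hpow : (σ x + x + c) ^ r = (σ y + y + c) ^ r := by
    have hneg : σ (u * ((σ y - y) - (σ x - x))) = -(u * ((σ y - y) - (σ x - x))) := by
      simp only [map_mul, map_sub, hσ y, hσ x, hu]
      ring
    rw [← hdiff, map_sub, map_pow, map_pow, hfix, hfix] at hneg
    have : (2 : F) * ((σ x + x + c) ^ r - (σ y + y + c) ^ r) = 0 := by linear_combination hneg
    exact sub_eq_zero.mp ((mul_eq_zero.mp this).resolve_left h2)
  have htrace : σ x + x = σ y + y := by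
    simpa using hr (hfix x) (hfix y) hpow
  have hanti : σ x - x = σ y - y := by
    rw [hpow, sub_self, eq_comm, mul_eq_zero, sub_eq_zero] at hdiff
    exact (hdiff.resolve_left hu0).symm
  exact mul_left_cancel₀ h2 (by linear_combination htrace - hanti)

theorem injective_pow_add_mul_sub_iff_of_involutive (hσ : Function.Involutive σ)
    (h2 : (2 : F) ≠ 0) {r : ℕ} {b c u : F} (hb0 : b ≠ 0) (hb : σ b = -b) (hc : σ c = c)
    (hu : σ u = u) :
    (Function.Injective fun x => (σ x + x + c) ^ r + u * σ x - u * x) ↔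
      u ≠ 0 ∧ Set.InjOn (· ^ r) {s | σ s = s} := by
  refine ⟨fun hinj => ⟨?_, ?_⟩, fun ⟨hu0, hr⟩ =>
    injective_pow_add_mul_sub_of_involutive σ hσ h2 hc hu hu0 hr⟩
  · rintro rfl
    exact hb0 (hinj (a₁ := b) (a₂ := 0) (by simp [hb]))
  · intro s hs t ht hst
    have : NeZero (2 : F) := ⟨h2⟩
    have hval : ∀ a, σ a = a →
        (σ ((a - c) / 2) + (a - c) / 2 + c) ^ r + u * σ ((a - c) / 2) - u * ((a - c) / 2) =
          a ^ r := fun a ha => by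
      have hfix : σ ((a - c) / 2) = (a - c) / 2 := by rw [map_div₀, map_sub, ha, hc, map_ofNat]
      rw [hfix, add_sub_cancel_right, add_halves, sub_add_cancel]
    have := hinj ((hval s hs).trans (hst.trans (hval t ht).symm))
    rwa [div_left_inj' h2, sub_left_inj] at this

end Involution

theorem injOn_pow_setOf_pow_eq_self {K : Type*} [Field K] {q r : ℕ} (hq : q ≠ 0) (hr : r ≠ 0)
    (hcop : r.Coprime (q - 1)) : Set.InjOn (· ^ r) {s : K | s ^ q = s} := by
  intro s (hs : s ^ q = s) t (ht : t ^ q = t) (hst : s ^ r = t ^ r)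
  rcases eq_or_ne t 0 with rfl | ht0
  · rwa [zero_pow hr, pow_eq_zero_iff hr] at hst
  have hs0 : s ≠ 0 := by
    rintro rfl
    exact ht0 (pow_eq_zero_iff hr |>.mp (hst.symm.trans (zero_pow hr)))
  have hr1 : (s / t) ^ r = 1 := by rw [div_pow, hst, div_self (pow_ne_zero r ht0)]
  have hq1 : (s / t) ^ (q - 1) = 1 := by
    have hst0 : s / t ≠ 0 := div_ne_zero hs0 ht0
    apply mul_right_cancel₀ hst0
    rw [pow_sub_one_mul hq, one_mul, div_pow, hs, ht]
  have := pow_gcd_eq_one.mpr ⟨hr1, hq1⟩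
  rwa [hcop, pow_one, div_eq_one_iff_eq ht0] at this

namespace FiniteField

variable {F : Type*} [Field F] [Fintype F]

theorem exists_ringHom_eq_pow {q n : ℕ} (hq : IsPrimePow q) (hF : Fintype.card F = q ^ n) :
    ∃ σ : F →+* F, ∀ x, σ x = x ^ q := by
  obtain ⟨p, k, hp, -, rfl⟩ := (isPrimePow_nat_iff q).mp hq
  have : Fact p.Prime := ⟨hp⟩
  have : CharP F p := charP_of_card_eq_prime_pow (hF.trans (pow_mul p k n).symm)
  exact ⟨iterateFrobenius F p k, iterateFrobenius_def p k⟩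

theorem exists_isPrimitiveRoot {d : ℕ} (hd : d ∣ Fintype.card F - 1) :
    ∃ ζ : F, IsPrimitiveRoot ζ d := by
  obtain ⟨g, hg⟩ := IsCyclic.exists_ofOrder_eq_natCard (α := Fˣ)
  rw [← Nat.card_eq_fintype_card, ← Nat.card_units F, ← hg] at hd
  have hg0 : orderOf g ≠ 0 := hg ▸ Nat.card_pos.ne'
  exact ⟨_, IsPrimitiveRoot.coe_units_iff.mpr
    (IsPrimitiveRoot.iff_orderOf.mpr (orderOf_pow_orderOf_div hg0 hd))⟩

theorem exists_ne_zero_pow_eq_neg {q : ℕ} (hq : Odd q) (hF : Fintype.card F = q ^ 2) :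
    ∃ b : F, b ≠ 0 ∧ b ^ q = -b := by
  have hq1 : q - 1 ≠ 0 := by
    have := (one_lt_pow_iff two_ne_zero).mp (hF ▸ Fintype.one_lt_card (α := F))
    omega
  have hdvd : 2 * (q - 1) ∣ Fintype.card F - 1 := by
    rw [hF, ← one_pow 2, Nat.sq_sub_sq]
    exact mul_dvd_mul_right (even_iff_two_dvd.mp (hq.add_odd odd_one)) _
  obtain ⟨ζ, hζ⟩ := exists_isPrimitiveRoot hdvd
  have hneg : ζ ^ (q - 1) = -1 := by
    have := hζ.pow_of_dvd hq1 (dvd_mul_left _ _)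
    rw [Nat.mul_div_cancel _ (Nat.pos_of_ne_zero hq1)] at this
    exact this.eq_neg_one_of_two_right
  refine ⟨ζ, hζ.ne_zero (by omega), ?_⟩
  rw [← pow_sub_one_mul (by omega), hneg, neg_one_mul]

theorem injOn_pow_iff_coprime {q r : ℕ} (hq : q - 1 ∣ Fintype.card F - 1) (hr : r ≠ 0) :
    Set.InjOn (· ^ r) {s : F | s ^ q = s} ↔ r.Coprime (q - 1) := by
  have hq1 : q - 1 ≠ 0 := by
    rintro h
    rw [h, zero_dvd_iff] at hq
    have := Fintype.one_lt_card (α := F)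
    omega
  refine ⟨fun hinj => ?_, injOn_pow_setOf_pow_eq_self (by omega) hr⟩
  by_contra hcop
  have hd : 1 < r.gcd (q - 1) := by
    have := Nat.gcd_pos_of_pos_right r (Nat.pos_of_ne_zero hq1)
    rw [Nat.Coprime] at hcop
    omega
  obtain ⟨ζ, hζ⟩ := exists_isPrimitiveRoot ((Nat.gcd_dvd_right r (q - 1)).trans hq)
  refine hζ.ne_one hd (hinj ?_ (one_pow q) ?_)
  · show ζ ^ q = ζ
    rw [← pow_sub_one_mul (by omega),
      (hζ.pow_eq_one_iff_dvd _).mpr (Nat.gcd_dvd_right r _), one_mul]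
  · show ζ ^ r = 1 ^ r
    rw [one_pow, (hζ.pow_eq_one_iff_dvd r).mpr (Nat.gcd_dvd_left r _)]

end FiniteField

theorem stmt_8 {F : Type*} [Field F] [Fintype F]
    (q : ℕ) (hq : IsPrimePow q) (hqodd : Odd q) (hF : Fintype.card F = q ^ 2)
    (r : ℕ) (hr : 0 < r)
    (c u : F) (hc : c ^ q = c) (hu : u ^ q = u) :
    Function.Bijective (fun x : F => (x ^ q + x + c) ^ r + u * x ^ q - u * x) ↔
      (u ≠ 0 ∧ Nat.gcd r (q - 1) = 1) := by
  obtain ⟨σ, hσ⟩ := FiniteField.exists_ringHom_eq_pow hq hF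
  have hσσ : Function.Involutive σ := fun x => by
    rw [hσ, hσ, ← pow_mul, ← sq, ← hF, FiniteField.pow_card]
  have h2 : (2 : F) ≠ 0 := Ring.two_ne_zero fun h => by
    have := FiniteField.even_card_iff_char_two.mp h
    rw [hF, ← Nat.even_iff] at this
    exact Nat.not_even_iff_odd.mpr hqodd.pow this
  obtain ⟨b, hb0, hb⟩ := FiniteField.exists_ne_zero_pow_eq_neg hqodd hF
  have hdvd : q - 1 ∣ Fintype.card F - 1 := by
    simpa [hF] using Nat.sub_dvd_pow_sub_pow q 1 2
  have hf : (fun x : F => (x ^ q + x + c) ^ r + u * x ^ q - u * x) =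
      fun x => (σ x + x + c) ^ r + u * σ x - u * x := by simp only [hσ]
  have hfix : {s : F | σ s = s} = {s | s ^ q = s} := by simp only [hσ]
  rw [← Finite.injective_iff_bijective, hf,
    injective_pow_add_mul_sub_iff_of_involutive σ hσσ h2 hb0 ((hσ b).trans hb)
      ((hσ c).trans hc) ((hσ u).trans hu), hfix,
    FiniteField.injOn_pow_iff_coprime hdvd hr.ne', Nat.coprime_iff_gcd_eq_one]
end
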